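/- arXiv:math-ph/0605055 — 2 statements merged into one kernel-verified Lean document; each statement's English description precedes it below -/
import Mathlib

section
/- A bilinear form g on ℝ³ (coordinates (x¹, x², t)) satisfies g(Λ_v x, Λ_v y) = g(x, y) for every Galilea boost Λ_v : (x¹, x², t) ↦ (x¹ + v¹t, x² + v²t, t) with v ∈ ℝ², if and only if there exist a ∈ ℝ² and a⁰ ∈ ℝ such that g((x, t), (x', t')) = a · (t' x − t x') + a⁰ t t' for all (x, t), (x', t') ∈ ℝ² × ℝ. -/
open Matrix

/-- Galilea boost with velocity `v` on `ℝⁿ × ℝ`. -/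
def boost {n : ℕ} (v : Fin n → ℝ) (u : (Fin n → ℝ) × ℝ) : (Fin n → ℝ) × ℝ :=
  (u.1 + u.2 • v, u.2)

lemma decomp (p : (Fin 2 → ℝ) × ℝ) :
    p = p.1 0 • (((Pi.single 0 1 : Fin 2 → ℝ), (0:ℝ)))
      + p.1 1 • ((Pi.single 1 1 : Fin 2 → ℝ), (0:ℝ))
      + p.2 • ((0 : Fin 2 → ℝ), (1:ℝ)) := by
  refine Prod.ext ?_ ?_
  · funext i
    fin_cases i <;> simp [Pi.single_apply]
  · simp

theorem galilean_invariant_bilinear_forms_dim2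
    (g : ((Fin 2 → ℝ) × ℝ) →ₗ[ℝ] ((Fin 2 → ℝ) × ℝ) →ₗ[ℝ] ℝ) :
    (∀ (v : Fin 2 → ℝ) (p q : (Fin 2 → ℝ) × ℝ), g (boost v p) (boost v q) = g p q) ↔
      ∃ (a : Fin 2 → ℝ) (a0 : ℝ), ∀ p q : (Fin 2 → ℝ) × ℝ,
        g p q = a ⬝ᵥ (q.2 • p.1 - p.2 • q.1) + a0 * p.2 * q.2 := by
  constructor
  · intro h
    have h1 : ∀ v y : Fin 2 → ℝ, g (v, (0:ℝ)) (y, (0:ℝ)) = 0 := by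
      intro v y
      have := h v ((0:Fin 2 → ℝ), (1:ℝ)) (y, (0:ℝ))
      simp only [boost] at this
      have hd : ((0:Fin 2 → ℝ) + (1:ℝ) • v, (1:ℝ)) = ((v, (0:ℝ)) : (Fin 2 → ℝ) × ℝ) + ((0:Fin 2 → ℝ), (1:ℝ)) := by
        simp
      have hy : (y + (0:ℝ) • v, (0:ℝ)) = ((y, (0:ℝ)) : (Fin 2 → ℝ) × ℝ) := by simp
      rw [hd, hy] at this
      simp only [map_add, LinearMap.add_apply] at this
      linarith
    have h2 : ∀ v : Fin 2 → ℝ, g ((0:Fin 2 → ℝ), (1:ℝ)) (v, (0:ℝ)) = - g (v, (0:ℝ)) ((0:Fin 2 → ℝ), (1:ℝ)) := by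
      intro v
      have := h v ((0:Fin 2 → ℝ), (1:ℝ)) ((0:Fin 2 → ℝ), (1:ℝ))
      simp only [boost] at this
      have hd : ((0:Fin 2 → ℝ) + (1:ℝ) • v, (1:ℝ)) = ((v, (0:ℝ)) : (Fin 2 → ℝ) × ℝ) + ((0:Fin 2 → ℝ), (1:ℝ)) := by
        simp
      rw [hd] at this
      simp only [map_add, LinearMap.add_apply] at this
      have e1 := h1 v v
      linarith
    refine ⟨fun i => g ((Pi.single i 1 : Fin 2 → ℝ), (0:ℝ)) ((0:Fin 2 → ℝ), (1:ℝ)),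
      g ((0:Fin 2 → ℝ), (1:ℝ)) ((0:Fin 2 → ℝ), (1:ℝ)), ?_⟩
    intro p q
    rw [decomp p, decomp q]
    simp only [map_add, _root_.map_smul, LinearMap.add_apply, LinearMap.smul_apply,
      smul_eq_mul, h1, h2, dotProduct, Fin.sum_univ_two, Pi.sub_apply, Pi.smul_apply,
      Prod.fst_add, Prod.snd_add, Prod.smul_fst, Prod.smul_snd, Pi.add_apply,
      Pi.single_apply, Pi.zero_apply]
    norm_num
    ring
  · rintro ⟨a, a0, hg⟩ v p q
    rw [hg, hg]
    simp only [boost, dotProduct, Fin.sum_univ_two, Pi.sub_apply, Pi.smul_apply,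
      Pi.add_apply, smul_eq_mul]
    ring
end

section
/- A bilinear form g on ℝⁿ × ℝ satisfies g(Λ_v x, Λ_v y) = g(x, y) for every Galilea boost Λ_v with v ∈ ℝⁿ, if and only if there exist a ∈ ℝⁿ and a⁰ ∈ ℝ such that g((x, t), (x', t')) = a · (t' x − t x') + a⁰ t t' for all (x, t), (x', t') ∈ ℝⁿ × ℝ. -/
open Matrix

private lemma dot_of_linear {n : ℕ} (f : (Fin n → ℝ) →ₗ[ℝ] ℝ) (x : Fin n → ℝ) :
    f x = (fun i => f (Pi.single i 1)) ⬝ᵥ x := by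
  have hx : x = ∑ i, x i • (Pi.single i 1 : Fin n → ℝ) := by
    ext j
    simp [Finset.sum_apply, Pi.single_apply]
  conv_lhs => rw [hx]
  rw [map_sum]
  simp only [_root_.map_smul, smul_eq_mul]
  simp [dotProduct, mul_comm]

theorem galilean_invariant_bilinear_forms_general
    (n : ℕ) (g : ((Fin n → ℝ) × ℝ) →ₗ[ℝ] ((Fin n → ℝ) × ℝ) →ₗ[ℝ] ℝ) :
    (∀ (v : Fin n → ℝ) (p q : (Fin n → ℝ) × ℝ), g (boost v p) (boost v q) = g p q) ↔
      ∃ (a : Fin n → ℝ) (a0 : ℝ), ∀ p q : (Fin n → ℝ) × ℝ,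
        g p q = a ⬝ᵥ (q.2 • p.1 - p.2 • q.1) + a0 * p.2 * q.2 := by
  constructor
  · intro h
    -- B = 0
    have key : ∀ x v : Fin n → ℝ, g (x, 0) (v, 0) = 0 := by
      intro x v
      have h1 := h v (x, 0) ((0 : Fin n → ℝ), (1 : ℝ))
      simp only [boost, zero_smul, add_zero, one_smul, zero_add] at h1
      have h2 : ((v : Fin n → ℝ), (1 : ℝ)) = (v, 0) + ((0 : Fin n → ℝ), (1 : ℝ)) := by
        simp
      rw [h2, map_add] at h1
      linarith
    -- skew
    have skew : ∀ v : Fin n → ℝ,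
        g ((0 : Fin n → ℝ), (1 : ℝ)) (v, 0) = - g (v, 0) ((0 : Fin n → ℝ), (1 : ℝ)) := by
      intro v
      have h1 := h v ((0 : Fin n → ℝ), (1 : ℝ)) ((0 : Fin n → ℝ), (1 : ℝ))
      simp only [boost, one_smul, zero_add] at h1
      have h2 : ((v : Fin n → ℝ), (1 : ℝ)) = (v, 0) + ((0 : Fin n → ℝ), (1 : ℝ)) := by
        simp
      rw [h2] at h1
      simp only [map_add, LinearMap.add_apply] at h1
      have hk := key v v
      linarith
    -- the linear functional c
    set c : (Fin n → ℝ) →ₗ[ℝ] ℝ :=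
      (g.flip ((0 : Fin n → ℝ), (1 : ℝ))).comp (LinearMap.inl ℝ (Fin n → ℝ) ℝ) with hc
    have hcx : ∀ x : Fin n → ℝ, c x = g (x, 0) ((0 : Fin n → ℝ), (1 : ℝ)) := by
      intro x; simp [hc]
    refine ⟨fun i => c (Pi.single i 1), g ((0 : Fin n → ℝ), (1 : ℝ)) ((0 : Fin n → ℝ), (1 : ℝ)),
      ?_⟩
    intro p q
    have hp : p = (p.1, (0 : ℝ)) + p.2 • ((0 : Fin n → ℝ), (1 : ℝ)) := by
      simp [Prod.ext_iff]
    have hq : q = (q.1, (0 : ℝ)) + q.2 • ((0 : Fin n → ℝ), (1 : ℝ)) := by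
      simp [Prod.ext_iff]
    calc g p q
        = g ((p.1, (0:ℝ)) + p.2 • ((0 : Fin n → ℝ), (1:ℝ)))
            ((q.1, (0:ℝ)) + q.2 • ((0 : Fin n → ℝ), (1:ℝ))) := by rw [← hp, ← hq]
      _ = g (p.1, 0) (q.1, 0) + q.2 * g (p.1, 0) ((0 : Fin n → ℝ), (1:ℝ))
          + p.2 * g ((0 : Fin n → ℝ), (1:ℝ)) (q.1, 0)
          + p.2 * (q.2 * g ((0 : Fin n → ℝ), (1:ℝ)) ((0 : Fin n → ℝ), (1:ℝ))) := by
          simp only [map_add, _root_.map_smul, LinearMap.add_apply, LinearMap.smul_apply,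
            smul_eq_mul]
          ring
      _ = q.2 * c p.1 - p.2 * c q.1
          + g ((0 : Fin n → ℝ), (1:ℝ)) ((0 : Fin n → ℝ), (1:ℝ)) * p.2 * q.2 := by
          rw [key, skew, ← hcx, ← hcx]; ring
      _ = _ := by
          rw [dot_of_linear c p.1, dot_of_linear c q.1]
          simp only [dotProduct, Pi.sub_apply, Pi.smul_apply, smul_eq_mul,
            Finset.mul_sum, ← Finset.sum_sub_distrib]
          congr 1
          apply Finset.sum_congr rfl
          intro i _
          ring
  · rintro ⟨a, a0, hf⟩ v p q
    rw [hf, hf]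
    simp only [boost]
    have hv : q.2 • (p.1 + p.2 • v) - p.2 • (q.1 + q.2 • v)
        = q.2 • p.1 - p.2 • q.1 := by
      ext i
      simp only [Pi.sub_apply, Pi.smul_apply, Pi.add_apply, smul_eq_mul]
      ring
    rw [hv]
end
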